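/- arXiv:2605.25455 — 3 statements merged into one kernel-verified Lean document; each statement's English description precedes it below -/
import Mathlib

section
/- Let ρ, Q be smooth functions on an open set in ℂⁿ with Q > 0, and let Φ = ρ Q^{−1/n}. Define J[u] = (−1)ⁿ det of the (n+1)×(n+1) matrix with entries u in the (0,0) position, ∂_{β̄}u in the first row, ∂_α u in the first column, and ∂_α∂_{β̄}u in the remaining block. Then J[Φ] = Q^{−(n+1)/n} · (−1)ⁿ · det of the matrix with entries ρ, ∂_{β̄}ρ, ∂_αρ, and ∂_α∂_{β̄}ρ − (ρ/n) ∂_α∂_{β̄}(log Q). -/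
open Complex

/-- Wirtinger derivative `∂/∂z_α`. -/
noncomputable def wd {n : ℕ} (α : Fin n) (f : (Fin n → ℂ) → ℂ) (z : Fin n → ℂ) : ℂ :=
  (1 / 2) * (fderiv ℝ f z (Pi.single α 1) - Complex.I * fderiv ℝ f z (Pi.single α Complex.I))

/-- Wirtinger derivative `∂/∂z̄_β`. -/
noncomputable def wdbar {n : ℕ} (β : Fin n) (f : (Fin n → ℂ) → ℂ) (z : Fin n → ℂ) : ℂ :=
  (1 / 2) * (fderiv ℝ f z (Pi.single β 1) + Complex.I * fderiv ℝ f z (Pi.single β Complex.I))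

/-- The `(n+1)×(n+1)` Monge–Ampère type border matrix
`[[u, ∂_{β̄}u],[∂_α u, ∂_α∂_{β̄}u]]` of a function `u : ℂⁿ → ℂ` at `z`. -/
noncomputable def MAmat (n : ℕ) (u : (Fin n → ℂ) → ℂ) (z : Fin n → ℂ) :
    Matrix (Fin (n + 1)) (Fin (n + 1)) ℂ :=
  Matrix.of fun i j =>
    Fin.cases (Fin.cases (u z) (fun β => wdbar β u z) j)
      (fun α => Fin.cases (wd α u z) (fun β => wd α (wdbar β u) z) j) i

/-- The Monge–Ampère operator `J[u] = (−1)ⁿ det [[u, ∂_{β̄}u],[∂_α u, ∂_α∂_{β̄}u]]`. -/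
noncomputable def Jop (n : ℕ) (u : (Fin n → ℂ) → ℂ) (z : Fin n → ℂ) : ℂ :=
  (-1 : ℂ) ^ n * (MAmat n u z).det

/-- generalized Wirtinger-type operator -/
noncomputable def dop {n : ℕ} (s : ℂ) (β : Fin n) (f : (Fin n → ℂ) → ℂ) (z : Fin n → ℂ) : ℂ :=
  (1 / 2) * (fderiv ℝ f z (Pi.single β 1) + s * fderiv ℝ f z (Pi.single β Complex.I))

lemma wd_def {n : ℕ} (α : Fin n) (f : (Fin n → ℂ) → ℂ) :
    wd α f = dop (-Complex.I) α f := by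
  funext z; simp only [wd, dop]; ring

lemma wdbar_def {n : ℕ} (β : Fin n) (f : (Fin n → ℂ) → ℂ) :
    wdbar β f = dop Complex.I β f := rfl

lemma dop_congr {n : ℕ} {s : ℂ} {β : Fin n} {f g : (Fin n → ℂ) → ℂ} {z : Fin n → ℂ}
    (h : f =ᶠ[nhds z] g) : dop s β f z = dop s β g z := by
  unfold dop; rw [h.fderiv_eq]

lemma dop_add {n : ℕ} {s : ℂ} {β : Fin n} {f g : (Fin n → ℂ) → ℂ} {z : Fin n → ℂ}
    (hf : DifferentiableAt ℝ f z) (hg : DifferentiableAt ℝ g z) :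
    dop s β (fun w => f w + g w) z = dop s β f z + dop s β g z := by
  unfold dop
  rw [fderiv_fun_add hf hg]
  simp only [ContinuousLinearMap.add_apply]
  ring

lemma dop_mul {n : ℕ} {s : ℂ} {β : Fin n} {f g : (Fin n → ℂ) → ℂ} {z : Fin n → ℂ}
    (hf : DifferentiableAt ℝ f z) (hg : DifferentiableAt ℝ g z) :
    dop s β (fun w => f w * g w) z = dop s β f z * g z + f z * dop s β g z := by
  unfold dop
  rw [fderiv_fun_mul hf hg]
  simp only [ContinuousLinearMap.add_apply, ContinuousLinearMap.smul_apply, smul_eq_mul]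
  ring

lemma dop_const_mul {n : ℕ} {s : ℂ} {β : Fin n} {c : ℂ} {f : (Fin n → ℂ) → ℂ} {z : Fin n → ℂ}
    (hf : DifferentiableAt ℝ f z) :
    dop s β (fun w => c * f w) z = c * dop s β f z := by
  unfold dop
  rw [fderiv_const_mul hf]
  simp only [ContinuousLinearMap.smul_apply, smul_eq_mul]
  ring

lemma dop_exp {n : ℕ} {s : ℂ} {β : Fin n} {h : (Fin n → ℂ) → ℂ} {z : Fin n → ℂ}
    (hh : DifferentiableAt ℝ h z) :
    dop s β (fun w => Complex.exp (h w)) z = Complex.exp (h z) * dop s β h z := by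
  unfold dop
  rw [hh.hasFDerivAt.cexp.fderiv]
  simp only [ContinuousLinearMap.smul_apply, smul_eq_mul]
  ring

lemma contDiffOn_dop {n : ℕ} {s : ℂ} {β : Fin n} {f : (Fin n → ℂ) → ℂ} {Ω : Set (Fin n → ℂ)}
    (hΩ : IsOpen Ω) (hf : ContDiffOn ℝ (⊤ : ℕ∞) f Ω) :
    ContDiffOn ℝ (⊤ : ℕ∞) (dop s β f) Ω := by
  have hd : ContDiffOn ℝ (⊤ : ℕ∞) (fun w => fderiv ℝ f w) Ω :=
    hf.fderiv_of_isOpen hΩ (by simp)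
  exact contDiffOn_const.mul
    ((hd.clm_apply contDiffOn_const).add (contDiffOn_const.mul (hd.clm_apply contDiffOn_const)))

lemma diffAt_of_contDiffOn {n : ℕ} {f : (Fin n → ℂ) → ℂ} {Ω : Set (Fin n → ℂ)}
    (hΩ : IsOpen Ω) (hf : ContDiffOn ℝ (⊤ : ℕ∞) f Ω) {z : Fin n → ℂ} (hz : z ∈ Ω) :
    DifferentiableAt ℝ f z :=
  (hf.contDiffAt (hΩ.mem_nhds hz)).differentiableAt (by simp)

/-- For `Φ = ρ Q^{−1/n}` one has
`J[Φ] = Q^{−(n+1)/n} (−1)ⁿ det [[ρ, ∂_{β̄}ρ],[∂_αρ, ∂_α∂_{β̄}ρ − (ρ/n)∂_α∂_{β̄}(log Q)]]`. -/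
theorem stmt_5 (n : ℕ) (hn : 1 ≤ n) (Ω : Set (Fin n → ℂ)) (hΩ : IsOpen Ω)
    (Q ρ : (Fin n → ℂ) → ℝ)
    (hQ : ContDiffOn ℝ (⊤ : ℕ∞) Q Ω) (hρ : ContDiffOn ℝ (⊤ : ℕ∞) ρ Ω)
    (hQpos : ∀ z ∈ Ω, 0 < Q z)
    (Φ ρc logQc : (Fin n → ℂ) → ℂ)
    (hΦ : ∀ z, Φ z = ((ρ z * Q z ^ (-(1 : ℝ) / n) : ℝ) : ℂ))
    (hρc : ∀ z, ρc z = ((ρ z : ℝ) : ℂ))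
    (hlogQc : ∀ z, logQc z = ((Real.log (Q z) : ℝ) : ℂ)) :
    ∀ z ∈ Ω,
      Jop n Φ z
        = ((Q z ^ (-((n : ℝ) + 1) / n) : ℝ) : ℂ) * (-1 : ℂ) ^ n *
            (Matrix.of fun i j =>
              Fin.cases (Fin.cases ((ρ z : ℂ)) (fun β => wdbar β ρc z) j)
                (fun α => Fin.cases (wd α ρc z)
                  (fun β => wd α (wdbar β ρc) z - ((ρ z : ℂ) / n) * wd α (wdbar β logQc) z) j)
                i : Matrix (Fin (n + 1)) (Fin (n + 1)) ℂ).det := by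
  intro z hz
  have hn0 : (n : ℝ) ≠ 0 := Nat.cast_ne_zero.mpr (by omega)
  set cr : ℝ := -(1 : ℝ) / n with hcrdef
  set E : (Fin n → ℂ) → ℂ := fun w => Complex.exp ((cr : ℂ) * logQc w) with hE
  -- smoothness of the complexified functions
  have hρcC : ContDiffOn ℝ (⊤ : ℕ∞) ρc Ω := by
    have h1 : ContDiffOn ℝ (⊤ : ℕ∞) (fun w => Complex.ofRealCLM (ρ w)) Ω :=
      Complex.ofRealCLM.contDiff.comp_contDiffOn hρ
    exact h1.congr fun w _ => by simp [hρc w]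
  have hlogQcC : ContDiffOn ℝ (⊤ : ℕ∞) logQc Ω := by
    have h0 : ContDiffOn ℝ (⊤ : ℕ∞) (fun w => Real.log (Q w)) Ω :=
      hQ.log fun w hw => (hQpos w hw).ne'
    have h1 : ContDiffOn ℝ (⊤ : ℕ∞) (fun w => Complex.ofRealCLM (Real.log (Q w))) Ω :=
      Complex.ofRealCLM.contDiff.comp_contDiffOn h0
    exact h1.congr fun w _ => by simp [hlogQc w]
  -- differentiability facts
  have dρc : ∀ w ∈ Ω, DifferentiableAt ℝ ρc w :=
    fun w hw => diffAt_of_contDiffOn hΩ hρcC hw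
  have dlogQc : ∀ w ∈ Ω, DifferentiableAt ℝ logQc w :=
    fun w hw => diffAt_of_contDiffOn hΩ hlogQcC hw
  have dhc : ∀ w ∈ Ω, DifferentiableAt ℝ (fun v => (cr : ℂ) * logQc v) w :=
    fun w hw => (dlogQc w hw).const_mul _
  have dE : ∀ w ∈ Ω, DifferentiableAt ℝ E w := fun w hw => by
    simp only [hE]; exact (dhc w hw).cexp
  have dqρ : ∀ (s : ℂ) (β : Fin n), ∀ w ∈ Ω, DifferentiableAt ℝ (dop s β ρc) w :=
    fun s β w hw => diffAt_of_contDiffOn hΩ (contDiffOn_dop hΩ hρcC) hw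
  have dqL : ∀ (s : ℂ) (β : Fin n), ∀ w ∈ Ω, DifferentiableAt ℝ (dop s β logQc) w :=
    fun s β w hw => diffAt_of_contDiffOn hΩ (contDiffOn_dop hΩ hlogQcC) hw
  -- value of E
  have hEval : ∀ w ∈ Ω, E w = ((Q w ^ cr : ℝ) : ℂ) := by
    intro w hw
    simp only [hE]
    rw [Real.rpow_def_of_pos (hQpos w hw), mul_comm (Real.log (Q w)) cr,
      Complex.ofReal_exp, Complex.ofReal_mul, hlogQc w]
  -- Φ = ρc * E on Ω
  have hΦE : ∀ w ∈ Ω, Φ w = ρc w * E w := by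
    intro w hw
    rw [hΦ w, hEval w hw, hρc w, Complex.ofReal_mul]
  -- first derivatives of Φ on Ω
  have hdop1 : ∀ (s : ℂ) (β : Fin n), ∀ w ∈ Ω,
      dop s β Φ w = E w * (dop s β ρc w + ρc w * ((cr : ℂ) * dop s β logQc w)) := by
    intro s β w hw
    have hev : Φ =ᶠ[nhds w] fun v => ρc v * E v :=
      Filter.eventuallyEq_of_mem (hΩ.mem_nhds hw) hΦE
    rw [dop_congr hev, dop_mul (dρc w hw) (dE w hw)]
    simp only [hE]
    rw [dop_exp (dhc w hw), dop_const_mul (dlogQc w hw)]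
    ring
  -- second derivatives at z
  have hd2 : ∀ (α β : Fin n),
      wd α (wdbar β Φ) z =
        E z * (((cr : ℂ) * wd α logQc z) * (wdbar β ρc z + ρc z * ((cr : ℂ) * wdbar β logQc z))
          + (wd α (wdbar β ρc) z + (wd α ρc z * ((cr : ℂ) * wdbar β logQc z)
            + ρc z * ((cr : ℂ) * wd α (wdbar β logQc) z)))) := by
    intro α β
    have hev : wdbar β Φ =ᶠ[nhds z]
        fun w => E w * (dop Complex.I β ρc w + ρc w * ((cr : ℂ) * dop Complex.I β logQc w)) :=
      Filter.eventuallyEq_of_mem (hΩ.mem_nhds hz) fun w hw => by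
        rw [wdbar_def]; exact hdop1 Complex.I β w hw
    have hGdiff : DifferentiableAt ℝ
        (fun w => dop Complex.I β ρc w + ρc w * ((cr : ℂ) * dop Complex.I β logQc w)) z :=
      (dqρ _ β z hz).add ((dρc z hz).mul ((dqL _ β z hz).const_mul _))
    rw [wd_def, dop_congr hev, dop_mul (dE z hz) hGdiff]
    simp only [hE]
    rw [dop_exp (dhc z hz), dop_const_mul (dlogQc z hz)]
    rw [dop_add (dqρ _ β z hz) ((dρc z hz).fun_mul ((dqL _ β z hz).const_mul _))]
    rw [dop_mul (dρc z hz) ((dqL _ β z hz).const_mul _)]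
    rw [dop_const_mul (dqL _ β z hz)]
    simp only [wd_def, wdbar_def]
    ring
  -- entry formulas at z
  have h01 : ∀ β : Fin n, wdbar β Φ z
      = E z * (wdbar β ρc z + ρc z * ((cr : ℂ) * wdbar β logQc z)) := fun β => by
    simp only [wdbar_def]; exact hdop1 Complex.I β z hz
  have h10 : ∀ α : Fin n, wd α Φ z
      = E z * (wd α ρc z + ρc z * ((cr : ℂ) * wd α logQc z)) := fun α => by
    simp only [wd_def]; exact hdop1 (-Complex.I) α z hz
  have hcrC : (cr : ℂ) = -(1 : ℂ) / (n : ℂ) := by rw [hcrdef]; push_cast; ring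
  -- the matrices
  set T : Matrix (Fin (n+1)) (Fin (n+1)) ℂ := Matrix.of fun i j =>
    Fin.cases (Fin.cases ((ρ z : ℂ)) (fun β => wdbar β ρc z) j)
      (fun α => Fin.cases (wd α ρc z)
        (fun β => wd α (wdbar β ρc) z - ((ρ z : ℂ) / n) * wd α (wdbar β logQc) z) j) i with hT
  set L : Matrix (Fin (n+1)) (Fin (n+1)) ℂ := Matrix.of fun i j =>
    Fin.cases (Fin.cases 1 (fun _ => 0) j)
      (fun α => Fin.cases ((cr : ℂ) * wd α logQc z) (fun β => if α = β then 1 else 0) j) i with hL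
  set R : Matrix (Fin (n+1)) (Fin (n+1)) ℂ := Matrix.of fun i j =>
    Fin.cases (Fin.cases 1 (fun β => (cr : ℂ) * wdbar β logQc z) j)
      (fun α => Fin.cases 0 (fun β => if α = β then 1 else 0) j) i with hR
  have hM : MAmat n Φ z = (E z) • (L * (T * R)) := by
    ext i j
    induction i using Fin.cases with
    | zero =>
      induction j using Fin.cases with
      | zero =>
        simp only [Matrix.smul_apply, Matrix.mul_apply, smul_eq_mul, MAmat, Matrix.of_apply,
          hL, hR, hT, Fin.sum_univ_succ, Fin.cases_zero, Fin.cases_succ, ite_mul, one_mul,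
          zero_mul, mul_ite, mul_one, mul_zero, Finset.sum_ite_eq, Finset.sum_ite_eq', Finset.mem_univ, if_true,
          zero_add, add_zero, Finset.sum_const_zero]
        rw [hΦE z hz, hρc z]; ring
      | succ β =>
        simp only [Matrix.smul_apply, Matrix.mul_apply, smul_eq_mul, MAmat, Matrix.of_apply,
          hL, hR, hT, Fin.sum_univ_succ, Fin.cases_zero, Fin.cases_succ, ite_mul, one_mul,
          zero_mul, mul_ite, mul_one, mul_zero, Finset.sum_ite_eq, Finset.sum_ite_eq', Finset.mem_univ, if_true,
          zero_add, add_zero, Finset.sum_const_zero]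
        rw [h01 β, hρc z]; ring
    | succ α =>
      induction j using Fin.cases with
      | zero =>
        simp only [Matrix.smul_apply, Matrix.mul_apply, smul_eq_mul, MAmat, Matrix.of_apply,
          hL, hR, hT, Fin.sum_univ_succ, Fin.cases_zero, Fin.cases_succ, ite_mul, one_mul,
          zero_mul, mul_ite, mul_one, mul_zero, Finset.sum_ite_eq, Finset.sum_ite_eq', Finset.mem_univ, if_true,
          zero_add, add_zero, Finset.sum_const_zero]
        rw [h10 α, hρc z]; ring
      | succ β =>
        simp only [Matrix.smul_apply, Matrix.mul_apply, smul_eq_mul, MAmat, Matrix.of_apply,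
          hL, hR, hT, Fin.sum_univ_succ, Fin.cases_zero, Fin.cases_succ, ite_mul, one_mul,
          zero_mul, mul_ite, mul_one, mul_zero, Finset.sum_ite_eq, Finset.sum_ite_eq', Finset.mem_univ, if_true,
          zero_add, add_zero, Finset.sum_const_zero]
        rw [hd2 α β, hρc z, hcrC]; ring
  have hLdet : L.det = 1 := by
    have ht : L.BlockTriangular OrderDual.toDual := by
      intro i j hij
      have hij' : i < j := hij
      induction i using Fin.cases with
      | zero =>
        induction j using Fin.cases with
        | zero => exact absurd hij' (lt_irrefl _)
        | succ β => simp [hL]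
      | succ α =>
        induction j using Fin.cases with
        | zero => exact absurd hij' (Fin.not_lt_zero _)
        | succ β =>
          have hne : α ≠ β := fun h => by subst h; exact absurd hij' (lt_irrefl _)
          simp [hL, hne]
    rw [Matrix.det_of_lowerTriangular L ht]
    apply Finset.prod_eq_one
    intro i _
    induction i using Fin.cases with
    | zero => simp [hL]
    | succ α => simp [hL]
  have hRdet : R.det = 1 := by
    have ht : R.BlockTriangular id := by
      intro i j hij
      have hij' : j < i := hij
      induction i using Fin.cases with
      | zero => exact absurd hij' (Fin.not_lt_zero _)
      | succ α =>
        induction j using Fin.cases with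
        | zero => simp [hR]
        | succ β =>
          have hne : α ≠ β := fun h => by subst h; exact absurd hij' (lt_irrefl _)
          simp [hR, hne]
    rw [Matrix.det_of_upperTriangular ht]
    apply Finset.prod_eq_one
    intro i _
    induction i using Fin.cases with
    | zero => simp [hR]
    | succ α => simp [hR]
  have hEpow : E z ^ (n + 1) = ((Q z ^ (-((n : ℝ) + 1) / n) : ℝ) : ℂ) := by
    rw [hEval z hz, ← Complex.ofReal_pow]
    congr 1
    rw [← Real.rpow_natCast (Q z ^ cr) (n + 1), ← Real.rpow_mul (hQpos z hz).le]
    congr 1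
    rw [hcrdef]; push_cast; ring
  simp only [Jop]
  rw [hM, Matrix.det_smul, Matrix.det_mul, Matrix.det_mul, hLdet, hRdet]
  simp only [Fintype.card_fin]
  rw [hEpow]
  ring
end

section
/- Let f, g, h: Ω → ℂ with h continuous on the closure of a bounded domain Ω ⊂ ℂⁿ, ρ a smooth defining function with nonvanishing gradient on ∂Ω, and m ∈ ℕ. If f(z) − g(z)ρ(z)^m − ρ(z)^{m'} ψ(z) log ρ(z) = 0 on Ω with f, g, ψ smooth up to the boundary and m' > 0, and f, g extend smoothly across ∂Ω, then ρ^{m'}ψ log ρ extends smoothly to the closure of Ω; if moreover m, m' are positive integers, then ψ vanishes to infinite order on ∂Ω. -/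
open Set Filter Topology Metric

set_option maxHeartbeats 1000000

variable {E : Type*} [NormedAddCommGroup E] [NormedSpace ℝ E]

/-- iterated derivative of a smooth function along a line segment -/
lemma lineDeriv_eq {U : Set E} (hU : IsOpen U) {h : E → ℝ} (hh : ContDiffOn ℝ (⊤ : ℕ∞) h U)
    (p v : E) {S : ℝ} (hS : 0 < S) (hmap : ∀ s ∈ Icc (0:ℝ) S, p + s • v ∈ U) (i : ℕ) :
    ∀ s ∈ Icc (0:ℝ) S, iteratedDerivWithin i (fun t => h (p + t • v)) (Icc 0 S) s
      = iteratedFDeriv ℝ i h (p + s • v) (fun _ => v) := by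
  induction i with
  | zero => intro s hs; simp [iteratedDerivWithin_zero]
  | succ i IH =>
    intro s hs
    have hud : UniqueDiffWithinAt ℝ (Icc (0:ℝ) S) s := (uniqueDiffOn_Icc hS) s hs
    rw [iteratedDerivWithin_succ]
    have hcongr : derivWithin (iteratedDerivWithin i (fun t => h (p + t • v)) (Icc 0 S))
        (Icc 0 S) s
        = derivWithin (fun t => iteratedFDeriv ℝ i h (p + t • v) (fun _ => v)) (Icc 0 S) s :=
      derivWithin_congr IH (IH s hs)
    rw [hcongr]
    -- differentiability of iteratedFDeriv at the point
    have hx : p + s • v ∈ U := hmap s hs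
    have hdOn : DifferentiableOn ℝ (iteratedFDerivWithin ℝ i h U) U :=
      hh.differentiableOn_iteratedFDerivWithin (by exact_mod_cast lt_top_iff_ne_top.2 (by simp))
        hU.uniqueDiffOn
    have hDA : DifferentiableAt ℝ (iteratedFDeriv ℝ i h) (p + s • v) := by
      have h1 : DifferentiableAt ℝ (iteratedFDerivWithin ℝ i h U) (p + s • v) :=
        (hdOn _ hx).differentiableAt (hU.mem_nhds hx)
      exact h1.congr_of_eventuallyEq
        (((iteratedFDerivWithin_of_isOpen i hU).eventuallyEq_of_mem (hU.mem_nhds hx)).symm)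
    have hσ : HasDerivWithinAt (fun t : ℝ => p + t • v) v (Icc 0 S) s := by
      simpa using (((hasDerivAt_id s).smul_const v).const_add p).hasDerivWithinAt
    have hcomp : HasDerivWithinAt (fun t : ℝ => iteratedFDeriv ℝ i h (p + t • v))
        (fderiv ℝ (iteratedFDeriv ℝ i h) (p + s • v) v) (Icc 0 S) s :=
      (hDA.hasFDerivAt).comp_hasDerivWithinAt s hσ
    have happ : HasDerivWithinAt (fun t : ℝ => iteratedFDeriv ℝ i h (p + t • v) (fun _ => v))
        ((fderiv ℝ (iteratedFDeriv ℝ i h) (p + s • v) v) (fun _ => v)) (Icc 0 S) s := by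
      have A := (ContinuousMultilinearMap.apply ℝ (fun _ : Fin i => E) ℝ
        (fun _ => v)).hasFDerivAt.comp_hasDerivWithinAt s hcomp
      exact A
    rw [happ.derivWithin hud]
    exact (iteratedFDeriv_succ_apply_left (fun _ => v)).symm

lemma taylor_eval_vanish {u : ℝ → ℝ} {S : ℝ} {l : ℕ}
    (hv : ∀ i < l, iteratedDerivWithin i u (Icc 0 S) 0 = 0) (s : ℝ) :
    taylorWithinEval u l (Icc 0 S) 0 s
      = ((l.factorial : ℝ)⁻¹ * s ^ l) * iteratedDerivWithin l u (Icc 0 S) 0 := by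
  rw [taylor_within_apply, Finset.sum_range_succ]
  have h0 : ∀ i ∈ Finset.range l,
      (((i.factorial : ℝ))⁻¹ * (s - 0) ^ i) • iteratedDerivWithin i u (Icc 0 S) 0 = 0 := by
    intro i hi
    rw [hv i (Finset.mem_range.1 hi)]; simp
  rw [Finset.sum_eq_zero h0]
  simp [smul_eq_mul]

lemma iDW_bound {u : ℝ → ℝ} {S : ℝ} (hS : 0 < S) (hu : ContDiffOn ℝ (⊤ : ℕ∞) u (Icc 0 S)) (l : ℕ) :
    ∃ C, ∀ y ∈ Icc (0:ℝ) S, ‖iteratedDerivWithin l u (Icc 0 S) y‖ ≤ C :=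
  isCompact_Icc.exists_bound_of_continuousOn
    (hu.continuousOn_iteratedDerivWithin (by exact_mod_cast le_top) (uniqueDiffOn_Icc hS))

lemma tendsto_taylor {u : ℝ → ℝ} {S : ℝ} (hS : 0 < S) (hu : ContDiffOn ℝ (⊤ : ℕ∞) u (Icc 0 S))
    (l : ℕ) (hv : ∀ i < l, iteratedDerivWithin i u (Icc 0 S) 0 = 0) :
    Tendsto (fun s => u s / s ^ l) (𝓝[>] (0:ℝ))
      (𝓝 (iteratedDerivWithin l u (Icc 0 S) 0 / l.factorial)) := by
  obtain ⟨C, hC⟩ := iDW_bound hS hu (l+1)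
  set b := iteratedDerivWithin l u (Icc 0 S) 0 / l.factorial with hb
  have hmem : Ioc (0:ℝ) S ∈ 𝓝[>] (0:ℝ) := Ioc_mem_nhdsGT_of_mem ⟨le_refl 0, hS⟩
  have key : ∀ s ∈ Ioc (0:ℝ) S, |u s / s ^ l - b| ≤ (C / l.factorial) * s := by
    intro s hs
    have hsIcc : s ∈ Icc (0:ℝ) S := ⟨hs.1.le, hs.2⟩
    have hrem := taylor_mean_remainder_bound hS.le (hu.of_le (by exact_mod_cast le_top)) hsIcc hC
    rw [taylor_eval_vanish hv] at hrem
    have hsl : (0:ℝ) < s ^ l := pow_pos hs.1 l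
    have heq : u s / s ^ l - b = (u s - (l.factorial : ℝ)⁻¹ * s ^ l
        * iteratedDerivWithin l u (Icc 0 S) 0) / s ^ l := by
      rw [hb]
      field_simp
    rw [heq, abs_div, abs_of_pos hsl, div_le_iff₀ hsl]
    calc |u s - (l.factorial:ℝ)⁻¹ * s ^ l * iteratedDerivWithin l u (Icc 0 S) 0|
        ≤ C * (s - 0) ^ (l+1) / l.factorial := by
          simpa [Real.norm_eq_abs, mul_assoc] using hrem
      _ = C / l.factorial * s * s ^ l := by rw [sub_zero]; ring
  have h0 : Tendsto (fun s : ℝ => (C / l.factorial) * s) (𝓝[>] (0:ℝ)) (𝓝 0) := by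
    have := (tendsto_id.const_mul (C / (l.factorial:ℝ))).mono_left
      (nhdsWithin_le_nhds : 𝓝[>] (0:ℝ) ≤ 𝓝 0)
    simpa using this
  rw [tendsto_iff_dist_tendsto_zero]
  apply squeeze_zero'
  · exact Eventually.of_forall fun s => dist_nonneg
  · filter_upwards [hmem] with s hs
    simpa [Real.dist_eq] using key s hs
  · exact h0

lemma bound_of_vanish {u : ℝ → ℝ} {S C : ℝ} (hS : 0 < S) (hu : ContDiffOn ℝ (⊤ : ℕ∞) u (Icc 0 S))
    (k : ℕ) (hv : ∀ i < k, iteratedDerivWithin i u (Icc 0 S) 0 = 0)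
    (hC : ∀ y ∈ Icc (0:ℝ) S, ‖iteratedDerivWithin k u (Icc 0 S) y‖ ≤ C) :
    ∀ s ∈ Icc (0:ℝ) S, |u s| ≤ C * s ^ k := by
  intro s hs
  have hC0 : 0 ≤ C := le_trans (norm_nonneg _) (hC 0 ⟨le_refl 0, hS.le⟩)
  match k with
  | 0 => simpa using hC s hs
  | (l+1) =>
    have hrem := taylor_mean_remainder_bound hS.le (hu.of_le (by exact_mod_cast le_top)) hs hC
    have hT0 : taylorWithinEval u l (Icc 0 S) 0 s = 0 := by
      rw [taylor_eval_vanish (fun i hi => hv i (Nat.lt_succ_of_lt hi)) s,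
        hv l (Nat.lt_succ_self l)]
      ring
    rw [hT0, sub_zero, Real.norm_eq_abs] at hrem
    calc |u s| ≤ C * (s - 0) ^ (l+1) / l.factorial := hrem
      _ ≤ C * s ^ (l+1) := by
          rw [sub_zero]
          have h1 : (1:ℝ) ≤ l.factorial := by exact_mod_cast Nat.one_le_iff_ne_zero.2 l.factorial_ne_zero
          have h2 : 0 ≤ C * s ^ (l+1) := mul_nonneg hC0 (pow_nonneg hs.1 _)
          exact div_le_self h2 h1

lemma tendsto_pow_mul_abs_log (d : ℕ) (hd : 0 < d) :
    Tendsto (fun s : ℝ => s ^ d * |Real.log s|) (𝓝[>] (0:ℝ)) (𝓝 0) := by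
  have h := tendsto_log_mul_rpow_nhdsGT_zero (r := (d:ℝ)) (by exact_mod_cast hd)
  have h' := h.neg
  rw [neg_zero] at h'
  apply h'.congr'
  filter_upwards [Ioo_mem_nhdsGT_of_mem (Set.left_mem_Ico.2 zero_lt_one)] with s hs
  have h1 : Real.log s ≤ 0 := Real.log_nonpos hs.1.le hs.2.le
  rw [abs_of_nonpos h1, Real.rpow_natCast]
  ring

lemma core_vanish {m' : ℕ} {u r φ : ℝ → ℝ} {S c1 c2 : ℝ} (hS : 0 < S) (hc1 : 0 < c1)
    (hu : ContDiffOn ℝ (⊤ : ℕ∞) u (Icc 0 S)) (hφ : ContDiffOn ℝ (⊤ : ℕ∞) φ (Icc 0 S))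
    (hr1 : ∀ s ∈ Icc (0:ℝ) S, c1 * s ≤ r s) (hr2 : ∀ s ∈ Icc (0:ℝ) S, r s ≤ c2 * s)
    (hidf : ∀ s ∈ Ioc (0:ℝ) S, u s = r s ^ m' * φ s * Real.log (r s)) :
    ∀ i, iteratedDerivWithin i φ (Icc 0 S) 0 = 0 := by
  have hc2 : 0 < c2 := by
    have h1 := hr1 S ⟨hS.le, le_refl S⟩
    have h2 := hr2 S ⟨hS.le, le_refl S⟩
    nlinarith
  set Λ : ℝ := max |Real.log c1| |Real.log c2| with hΛ
  have hΛ0 : 0 ≤ Λ := le_trans (abs_nonneg _) (le_max_left _ _)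
  have hrpos : ∀ s ∈ Ioc (0:ℝ) S, 0 < r s := fun s hs =>
    lt_of_lt_of_le (mul_pos hc1 hs.1) (hr1 s ⟨hs.1.le, hs.2⟩)
  -- |log (r s)| is within Λ of |log s|
  have hlog : ∀ s ∈ Ioc (0:ℝ) S, |Real.log (r s) - Real.log s| ≤ Λ := by
    intro s hs
    have h1 : Real.log (r s) - Real.log s = Real.log (r s / s) :=
      (Real.log_div (hrpos s hs).ne' hs.1.ne').symm
    rw [h1]
    have hq1 : c1 ≤ r s / s := (le_div_iff₀ hs.1).2 (hr1 s ⟨hs.1.le, hs.2⟩)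
    have hq2 : r s / s ≤ c2 := (div_le_iff₀ hs.1).2 (by linarith [hr2 s ⟨hs.1.le, hs.2⟩])
    rw [abs_le]
    constructor
    · have := Real.log_le_log hc1 hq1
      have h2 : -|Real.log c1| ≤ Real.log c1 := neg_abs_le _
      have : -Λ ≤ Real.log c1 := le_trans (neg_le_neg (le_max_left _ _)) h2
      linarith [Real.log_le_log hc1 hq1]
    · have h3 := Real.log_le_log (lt_of_lt_of_le hc1 hq1) hq2
      have h4 : Real.log c2 ≤ Λ := le_trans (le_abs_self _) (le_max_right _ _)
      linarith
  intro i
  induction i using Nat.strong_induction_on with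
  | _ i IH =>
  set j := m' + i with hj
  -- bound on φ from vanishing of lower coefficients
  obtain ⟨Cφ, hCφ⟩ := iDW_bound hS hφ i
  have hφb : ∀ s ∈ Icc (0:ℝ) S, |φ s| ≤ Cφ * s ^ i := bound_of_vanish hS hφ i IH hCφ
  have hCφ0 : 0 ≤ Cφ := le_trans (norm_nonneg _) (hCφ 0 ⟨le_refl 0, hS.le⟩)
  -- bound on u
  have hub : ∀ s ∈ Ioc (0:ℝ) S, |u s| ≤ c2 ^ m' * Cφ * (s ^ j * (|Real.log s| + Λ)) := by
    intro s hs
    have hsIcc : s ∈ Icc (0:ℝ) S := ⟨hs.1.le, hs.2⟩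
    rw [hidf s hs]
    have h1 : |r s ^ m' * φ s * Real.log (r s)| = r s ^ m' * |φ s| * |Real.log (r s)| := by
      rw [abs_mul, abs_mul, abs_pow, abs_of_pos (hrpos s hs)]
    rw [h1]
    have h2 : r s ^ m' ≤ (c2 * s) ^ m' :=
      pow_le_pow_left₀ (hrpos s hs).le (hr2 s hsIcc) m'
    have h3 : |Real.log (r s)| ≤ |Real.log s| + Λ := by
      have := hlog s hs
      have := abs_sub_abs_le_abs_sub (Real.log (r s)) (Real.log s)
      linarith
    have hA : r s ^ m' * |φ s| ≤ (c2 * s) ^ m' * (Cφ * s ^ i) :=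
      mul_le_mul h2 (hφb s hsIcc) (abs_nonneg _)
        (pow_nonneg (mul_nonneg hc2.le hs.1.le) _)
    calc r s ^ m' * |φ s| * |Real.log (r s)|
        ≤ (c2 * s) ^ m' * (Cφ * s ^ i) * (|Real.log s| + Λ) := by
          apply mul_le_mul hA h3 (abs_nonneg _)
          exact mul_nonneg (pow_nonneg (mul_nonneg hc2.le hs.1.le) _)
            (mul_nonneg hCφ0 (pow_nonneg hs.1.le _))
      _ = c2 ^ m' * Cφ * (s ^ j * (|Real.log s| + Λ)) := by
          rw [mul_pow, hj, pow_add]; ring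
  -- all Taylor coefficients of u below j vanish
  have hau : ∀ l, l < j → iteratedDerivWithin l u (Icc 0 S) 0 = 0 := by
    intro l
    induction l using Nat.strong_induction_on with
    | _ l IHl =>
    intro hlj
    have htd := tendsto_taylor hS hu l (fun l' hl' => IHl l' hl' (lt_trans hl' hlj))
    obtain ⟨d, hd⟩ : ∃ d : ℕ, j = l + d := ⟨j - l, (Nat.add_sub_cancel' hlj.le).symm⟩
    have hd1 : 0 < d := by omega
    -- limit zero
    have hto0 : Tendsto (fun s => u s / s ^ l) (𝓝[>] (0:ℝ)) (𝓝 0) := by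
      have hlim : Tendsto (fun s : ℝ => c2 ^ m' * Cφ * (s ^ d * (|Real.log s| + Λ)))
          (𝓝[>] (0:ℝ)) (𝓝 0) := by
        have h1 := tendsto_pow_mul_abs_log d hd1
        have h2 : Tendsto (fun s : ℝ => s ^ d * Λ) (𝓝[>] (0:ℝ)) (𝓝 0) := by
          have : Tendsto (fun s : ℝ => s ^ d) (𝓝[>] (0:ℝ)) (𝓝 0) := by
            have := (continuous_pow d).tendsto (0:ℝ)
            rw [zero_pow hd1.ne'] at this
            exact this.mono_left nhdsWithin_le_nhds
          simpa using this.mul_const Λ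
        have h3 := (h1.add h2)
        rw [add_zero] at h3
        have h4 := h3.const_mul (c2 ^ m' * Cφ)
        rw [mul_zero] at h4
        apply h4.congr
        intro s; ring
      rw [tendsto_iff_dist_tendsto_zero]
      apply squeeze_zero'
      · exact Eventually.of_forall fun s => dist_nonneg
      · filter_upwards [Ioc_mem_nhdsGT_of_mem (Set.left_mem_Ico.2 hS)] with s hs
        have hsl : (0:ℝ) < s ^ l := pow_pos hs.1 l
        rw [Real.dist_eq, sub_zero, abs_div, abs_of_pos hsl, div_le_iff₀ hsl]
        calc |u s| ≤ c2 ^ m' * Cφ * (s ^ j * (|Real.log s| + Λ)) := hub s hs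
          _ = c2 ^ m' * Cφ * (s ^ d * (|Real.log s| + Λ)) * s ^ l := by
              rw [hd, pow_add]; ring
      · exact hlim
    have := tendsto_nhds_unique htd hto0
    have hfac : (l.factorial : ℝ) ≠ 0 := by exact_mod_cast l.factorial_ne_zero
    field_simp at this
    simpa using this
  -- Taylor limit for u at order j
  have htdj := tendsto_taylor hS hu j hau
  -- X := u / (s^j log s)  tends to 0
  have hXlim : Tendsto (fun s => u s / s ^ j * (Real.log s)⁻¹) (𝓝[>] (0:ℝ)) (𝓝 0) := by
    have hinv : Tendsto (fun s : ℝ => (Real.log s)⁻¹) (𝓝[>] (0:ℝ)) (𝓝 0) := by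
      have h1 : Tendsto (fun s : ℝ => -Real.log s) (𝓝[>] (0:ℝ)) atTop :=
        tendsto_neg_atBot_atTop.comp Real.tendsto_log_nhdsGT_zero
      have h2 := tendsto_inv_atTop_zero.comp h1
      have h3 := h2.neg
      rw [neg_zero] at h3
      apply h3.congr
      intro s
      simp [inv_neg]
    have := htdj.mul hinv
    rwa [mul_zero] at this
  -- φ / s^i tends to 0
  have hφ0 : Tendsto (fun s => φ s / s ^ i) (𝓝[>] (0:ℝ)) (𝓝 0) := by
    have hevsmall : ∀ᶠ s in 𝓝[>] (0:ℝ), Real.log s ≤ -(2 * Λ + 1) :=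
      Real.tendsto_log_nhdsGT_zero.eventually_le_atBot _
    have hglim : Tendsto (fun s => (2 / c1 ^ m') * |u s / s ^ j * (Real.log s)⁻¹|)
        (𝓝[>] (0:ℝ)) (𝓝 0) := by
      have h1 := hXlim.abs
      rw [abs_zero] at h1
      have h2 := h1.const_mul (2 / c1 ^ m')
      rwa [mul_zero] at h2
    have hbound : ∀ᶠ s in 𝓝[>] (0:ℝ), dist (φ s / s ^ i) 0
        ≤ (2 / c1 ^ m') * |u s / s ^ j * (Real.log s)⁻¹| := by
      filter_upwards [Ioc_mem_nhdsGT_of_mem (Set.left_mem_Ico.2 hS), hevsmall] with s hs hsm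
      have hsIcc : s ∈ Icc (0:ℝ) S := ⟨hs.1.le, hs.2⟩
      have hlogs : 2 * Λ + 1 ≤ |Real.log s| := by
        rw [abs_of_nonpos (by linarith)]; linarith
      have hlogr : (|Real.log s|) / 2 ≤ |Real.log (r s)| := by
        have h1 := hlog s hs
        have h2 := abs_sub_abs_le_abs_sub (Real.log s) (Real.log (r s))
        rw [abs_sub_comm] at h1
        linarith
      have hrm : (c1 * s) ^ m' ≤ r s ^ m' :=
        pow_le_pow_left₀ (mul_nonneg hc1.le hs.1.le) (hr1 s hsIcc) m'
      have hiden : r s ^ m' * |Real.log (r s)| * |φ s| = |u s| := by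
        rw [hidf s hs, abs_mul, abs_mul, abs_pow, abs_of_pos (hrpos s hs)]; ring
      have hspos := hs.1
      have hlogspos : (0:ℝ) < |Real.log s| := by linarith
      have hpos2 : (0:ℝ) < (c1 * s) ^ m' * (|Real.log s| / 2) :=
        mul_pos (pow_pos (mul_pos hc1 hspos) _) (by linarith)
      have hkey : |φ s| * ((c1 * s) ^ m' * (|Real.log s| / 2)) ≤ |u s| := by
        rw [← hiden]
        have h5 : (c1 * s) ^ m' * (|Real.log s| / 2) ≤ r s ^ m' * |Real.log (r s)| :=
          mul_le_mul hrm hlogr (by linarith) (pow_nonneg (hrpos s hs).le _)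
        calc |φ s| * ((c1 * s) ^ m' * (|Real.log s| / 2))
            ≤ |φ s| * (r s ^ m' * |Real.log (r s)|) :=
              mul_le_mul_of_nonneg_left h5 (abs_nonneg _)
          _ = r s ^ m' * |Real.log (r s)| * |φ s| := by ring
      have hφle : |φ s| ≤ |u s| / ((c1 * s) ^ m' * (|Real.log s| / 2)) :=
        (le_div_iff₀ hpos2).2 hkey
      rw [Real.dist_eq, sub_zero, abs_div, abs_of_pos (pow_pos hspos i)]
      have heq2 : (2 / c1 ^ m') * |u s / s ^ j * (Real.log s)⁻¹|
          = |u s| / ((c1 * s) ^ m' * (|Real.log s| / 2)) / s ^ i := by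
        rw [abs_mul, abs_div, abs_of_pos (pow_pos hspos j), abs_inv, hj, pow_add, mul_pow]
        field_simp
      rw [heq2]
      gcongr
    rw [tendsto_iff_dist_tendsto_zero]
    exact squeeze_zero' (Eventually.of_forall fun s => dist_nonneg) hbound hglim
  have htdφ := tendsto_taylor hS hφ i IH
  have := tendsto_nhds_unique htdφ hφ0
  have hfac : (i.factorial : ℝ) ≠ 0 := by exact_mod_cast i.factorial_ne_zero
  field_simp at this
  simpa using this

/-- Fu–Wong type lemma: if `f − g ρᵐ − ρ^{m'} ψ log ρ = 0` on `Ω` with `f, g, ψ, ρ`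
smooth up to the boundary, `ρ` a defining function (positive on `Ω`, vanishing on
`∂Ω`, with nonvanishing gradient there) and `m' > 0`, then `ρ^{m'} ψ log ρ` extends
smoothly to the closure; if moreover `m > 0`, then `ψ` vanishes to infinite order
at `∂Ω` (i.e. `ψ = O(ρᵏ)` for every `k`). -/
theorem stmt_15 (n : ℕ) (U Ω : Set (Fin n → ℂ)) (hU : IsOpen U) (hΩ : IsOpen Ω)
    (hΩb : Bornology.IsBounded Ω) (hcl : closure Ω ⊆ U)
    (f g ψ ρ : (Fin n → ℂ) → ℝ)
    (hf : ContDiffOn ℝ (⊤ : ℕ∞) f U) (hg : ContDiffOn ℝ (⊤ : ℕ∞) g U)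
    (hψ : ContDiffOn ℝ (⊤ : ℕ∞) ψ U) (hρ : ContDiffOn ℝ (⊤ : ℕ∞) ρ U)
    (hρpos : ∀ z ∈ Ω, 0 < ρ z)
    (hρ0 : ∀ z ∈ frontier Ω, ρ z = 0)
    (hgrad : ∀ z ∈ frontier Ω, fderiv ℝ ρ z ≠ 0)
    (m m' : ℕ) (hm' : 0 < m')
    (hid : ∀ z ∈ Ω, f z - g z * ρ z ^ m - ρ z ^ m' * ψ z * Real.log (ρ z) = 0) :
    (∃ E : (Fin n → ℂ) → ℝ, ContDiffOn ℝ (⊤ : ℕ∞) E U ∧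
        ∀ z ∈ Ω, E z = ρ z ^ m' * ψ z * Real.log (ρ z)) ∧
    (0 < m → ∀ k : ℕ, ∃ Ck : ℝ, ∀ z ∈ Ω, |ψ z| ≤ Ck * ρ z ^ k) := by
  classical
  set F : (Fin n → ℂ) → ℝ := fun z => f z - g z * ρ z ^ m with hFdef
  have hF : ContDiffOn ℝ (⊤ : ℕ∞) F U := hf.sub (hg.mul (hρ.pow m))
  have hFeq : ∀ z ∈ Ω, F z = ρ z ^ m' * ψ z * Real.log (ρ z) := by
    intro z hz
    have := hid z hz
    simp only [hFdef]
    linarith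
  refine ⟨⟨F, hF, hFeq⟩, ?_⟩
  intro _ k
  rcases Ω.eq_empty_or_nonempty with rfl | hΩne
  · exact ⟨0, fun z hz => absurd hz (Set.notMem_empty z)⟩
  have hK : IsCompact (closure Ω) := hΩb.isCompact_closure
  -- bound for ψ on the closure
  obtain ⟨Mψ, hMψ⟩ : ∃ M, ∀ z ∈ closure Ω, ‖ψ z‖ ≤ M :=
    hK.exists_bound_of_continuousOn (hψ.continuousOn.mono hcl)
  have hMψ0 : 0 ≤ Mψ := le_trans (norm_nonneg _) (hMψ _ (subset_closure hΩne.choose_spec))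
  by_cases hΓ : (frontier Ω).Nonempty
  swap
  · -- empty frontier : closure Ω = Ω, ρ has a positive minimum
    have hfe : frontier Ω = ∅ := Set.not_nonempty_iff_eq_empty.1 hΓ
    have hclo : closure Ω = Ω := by
      have h1 : closure Ω \ Ω = ∅ := by rw [← hΩ.frontier_eq]; exact hfe
      apply Subset.antisymm _ subset_closure
      intro x hx
      by_contra hxΩ
      have h2 : x ∈ closure Ω \ Ω := ⟨hx, hxΩ⟩
      rw [h1] at h2
      exact h2
    have hKΩ : IsCompact Ω := hclo ▸ hK
    obtain ⟨z₀, hz₀, hminρ'⟩ := hKΩ.exists_isMinOn hΩne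
      (hρ.continuousOn.mono (hclo ▸ hcl))
    have hminρ : ∀ z ∈ Ω, ρ z₀ ≤ ρ z := fun z hz => hminρ' hz
    have hε : 0 < ρ z₀ := hρpos z₀ hz₀
    refine ⟨Mψ / ρ z₀ ^ k, fun z hz => ?_⟩
    have h1 : ρ z₀ ^ k ≤ ρ z ^ k := pow_le_pow_left₀ hε.le (hminρ z hz) k
    have h2 : |ψ z| ≤ Mψ := by
      have := hMψ z (subset_closure hz)
      simpa [Real.norm_eq_abs] using this
    rw [div_mul_eq_mul_div, le_div_iff₀ (pow_pos hε k)]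
    calc |ψ z| * ρ z₀ ^ k ≤ Mψ * ρ z ^ k := by
          apply mul_le_mul h2 h1 (pow_nonneg hε.le k) hMψ0
      _ = Mψ * ρ z ^ k := rfl

  -- main case : nonempty frontier
  have hΓcp : IsCompact (frontier Ω) :=
    hK.of_isClosed_subset isClosed_frontier frontier_subset_closure
  have hΓU : frontier Ω ⊆ U := fun p hp => hcl (frontier_subset_closure hp)
  have hdc : ContinuousOn (fderiv ℝ ρ) U := hρ.continuousOn_fderiv_of_isOpen hU (by simp)
  obtain ⟨pm, hpm, hmina'⟩ := hΓcp.exists_isMinOn hΓ ((hdc.mono hΓU).norm)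
  set a := ‖fderiv ℝ ρ pm‖ with ha_def
  have ha : 0 < a := norm_pos_iff.2 (hgrad pm hpm)
  have hmina : ∀ p ∈ frontier Ω, a ≤ ‖fderiv ℝ ρ p‖ := fun p hp => (isMinOn_iff.1 hmina') p hp
  obtain ⟨r₀, hr₀pos, hthick⟩ := hΓcp.exists_cthickening_subset_open hU hΓU
  have hK2cp : IsCompact (cthickening r₀ (frontier Ω)) := hΓcp.cthickening
  obtain ⟨A, hA⟩ := hK2cp.exists_bound_of_continuousOn (hdc.mono hthick)
  have haA : a ≤ A := le_trans (hmina pm hpm) (hA pm (self_subset_cthickening _ hpm))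
  have hA0 : 0 < A := lt_of_lt_of_le ha haA
  have hUC := hK2cp.uniformContinuousOn_of_continuous (hdc.mono hthick)
  rw [Metric.uniformContinuousOn_iff] at hUC
  obtain ⟨δ₀, hδ₀pos, hδ₀⟩ := hUC (a/4) (by positivity)
  set δ₁ := min δ₀ r₀ with hδ₁def
  have hδ₁pos : 0 < δ₁ := lt_min hδ₀pos hr₀pos
  set β := A * (2/a) with hβdef
  have hβpos : 0 < β := by positivity
  set T' := a * δ₁ / 8 with hT'def
  have hT'pos : 0 < T' := by positivity
  -- far set and its minimum of ρ
  set Wf := closure Ω ∩ {w | δ₁/4 ≤ infDist w (frontier Ω)} with hWfdef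
  have hWfcp : IsCompact Wf := hK.of_isClosed_subset
    (isClosed_closure.inter (isClosed_le continuous_const (continuous_infDist_pt _)))
    Set.inter_subset_left
  have hWfΩ : Wf ⊆ Ω := by
    rintro w ⟨hwcl, hwd⟩
    by_contra hwΩ
    have hwf : w ∈ frontier Ω := by rw [hΩ.frontier_eq]; exact ⟨hwcl, hwΩ⟩
    have h0 : infDist w (frontier Ω) = 0 := infDist_zero_of_mem hwf
    have hwd' : δ₁/4 ≤ infDist w (frontier Ω) := hwd
    rw [h0] at hwd'
    linarith
  obtain ⟨ε₁, hε₁pos, hWfρ⟩ : ∃ ε₁, 0 < ε₁ ∧ ∀ w ∈ Wf, ε₁ ≤ ρ w := by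
    rcases Wf.eq_empty_or_nonempty with he | hne
    · exact ⟨1, one_pos, by rw [he]; simp⟩
    · obtain ⟨w₀, hw₀, hminw'⟩ := hWfcp.exists_isMinOn hne
        (hρ.continuousOn.mono (Set.inter_subset_left.trans hcl))
      exact ⟨ρ w₀, hρpos _ (hWfΩ hw₀), fun w hw => (isMinOn_iff.1 hminw') w hw⟩
  set ε := min (T'/4) ε₁ with hεdef
  have hεpos : 0 < ε := lt_min (by positivity) hε₁pos
  -- bound for the k-th derivative of ψ on the closure
  have hψIt : ContinuousOn (iteratedFDeriv ℝ k ψ) (closure Ω) := by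
    apply ((hψ.continuousOn_iteratedFDerivWithin (by exact_mod_cast le_top) hU.uniqueDiffOn).mono hcl).congr
    intro x hx
    exact (iteratedFDerivWithin_of_isOpen k hU (hcl hx)).symm
  obtain ⟨CΨ, hCΨ⟩ := hK.exists_bound_of_continuousOn hψIt
  have hCΨ0 : 0 ≤ CΨ := le_trans (norm_nonneg _) (hCΨ _ (subset_closure hΩne.choose_spec))
  -- the near-boundary key estimate
  have key : ∀ z ∈ Ω, ρ z < ε → |ψ z| ≤ (CΨ * (2/a)^k * 2^k) * ρ z ^ k := by
    intro z hz hρz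
    -- find a close frontier point
    have hzWf : z ∉ Wf := by
      intro hzw
      have := hWfρ z hzw
      have h2 : ε ≤ ε₁ := min_le_right _ _
      linarith
    have hinf : infDist z (frontier Ω) < δ₁/4 := by
      by_contra hcon
      exact hzWf ⟨subset_closure hz, by simpa using not_lt.1 hcon⟩
    obtain ⟨p₀, hp₀, hdisteq⟩ := hΓcp.exists_infDist_eq_dist hΓ z
    have hdistp₀ : dist z p₀ < δ₁/4 := by rw [← hdisteq]; exact hinf
    set L := fderiv ℝ ρ p₀ with hLdef
    have haL : a ≤ ‖L‖ := hmina p₀ hp₀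
    -- a good direction v
    obtain ⟨v, hvn, hLv⟩ : ∃ v, ‖v‖ ≤ 2/a ∧ L v = 1 := by
      obtain ⟨u0, hu0n, hu0⟩ : ∃ u0, ‖u0‖ ≤ 1 ∧ a/2 ≤ ‖L u0‖ := by
        by_contra hcon
        push_neg at hcon
        have hb : ‖L‖ ≤ a/2 := by
          apply L.opNorm_le_bound (by positivity)
          intro x
          rcases eq_or_ne x 0 with rfl | hx
          · simp
          · have hxn : (0:ℝ) < ‖x‖ := norm_pos_iff.2 hx
            have h1 : ‖L ((‖x‖)⁻¹ • x)‖ < a/2 := by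
              apply hcon
              rw [norm_smul, norm_inv, norm_norm]
              rw [inv_mul_cancel₀ hxn.ne']
            rw [map_smul, norm_smul, norm_inv, norm_norm] at h1
            rw [inv_mul_lt_iff₀ hxn] at h1
            nlinarith
        linarith
      have hLu0 : L u0 ≠ 0 := by
        intro h0
        rw [h0] at hu0
        simp at hu0
        linarith
      refine ⟨(L u0)⁻¹ • u0, ?_, ?_⟩
      · rw [norm_smul, norm_inv, Real.norm_eq_abs]
        have h1 : a/2 ≤ |L u0| := by simpa [Real.norm_eq_abs] using hu0
        have h2 : (0:ℝ) < |L u0| := lt_of_lt_of_le (by positivity) h1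
        calc |L u0|⁻¹ * ‖u0‖ ≤ |L u0|⁻¹ * 1 := by
              exact mul_le_mul_of_nonneg_left hu0n (inv_nonneg.2 (abs_nonneg _))
          _ = |L u0|⁻¹ := mul_one _
          _ ≤ (a/2)⁻¹ := by
              apply inv_anti₀ (by positivity) h1
          _ = 2/a := by rw [inv_div]
      · rw [map_smul, smul_eq_mul, inv_mul_cancel₀ hLu0]
    -- the flow curve
    set γ : ℝ → (Fin n → ℂ) := fun t => z - t • v with hγdef
    have hγ0 : γ 0 = z := by simp [hγdef]
    have hclose : ∀ t ∈ Icc (0:ℝ) T', dist (γ t) p₀ ≤ δ₁/2 := by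
      intro t ht
      have h1 : dist (γ t) z ≤ t * (2/a) := by
        rw [hγdef, dist_eq_norm]
        simp only [sub_sub_cancel_left, norm_neg]
        rw [norm_smul, Real.norm_eq_abs, abs_of_nonneg ht.1]
        exact mul_le_mul_of_nonneg_left hvn ht.1
      have h2 : T' * (2/a) = δ₁/4 := by
        rw [hT'def]; field_simp; ring
      calc dist (γ t) p₀ ≤ dist (γ t) z + dist z p₀ := dist_triangle _ _ _
        _ ≤ t * (2/a) + δ₁/4 := by
            apply add_le_add h1 hdistp₀.le
        _ ≤ T' * (2/a) + δ₁/4 := by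
            have := mul_le_mul_of_nonneg_right ht.2 (by positivity : (0:ℝ) ≤ 2/a)
            linarith
        _ = δ₁/2 := by rw [h2]; ring
    have hγK2 : ∀ t ∈ Icc (0:ℝ) T', γ t ∈ cthickening r₀ (frontier Ω) := by
      intro t ht
      refine mem_cthickening_of_dist_le (γ t) p₀ r₀ _ hp₀ ?_
      calc dist (γ t) p₀ ≤ δ₁/2 := hclose t ht
        _ ≤ δ₁ := by linarith
        _ ≤ r₀ := min_le_right _ _
    have hγU : ∀ t ∈ Icc (0:ℝ) T', γ t ∈ U := fun t ht => hthick (hγK2 t ht)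
    have hDlow : ∀ t ∈ Icc (0:ℝ) T', (1:ℝ)/2 ≤ fderiv ℝ ρ (γ t) v := by
      intro t ht
      have hdd : dist (fderiv ℝ ρ (γ t)) L < a/4 := by
        apply hδ₀ (γ t) (hγK2 t ht) p₀ (self_subset_cthickening _ hp₀)
        calc dist (γ t) p₀ ≤ δ₁/2 := hclose t ht
          _ < δ₁ := by linarith
          _ ≤ δ₀ := min_le_left _ _
      have h2 : ‖(fderiv ℝ ρ (γ t) - L) v‖ ≤ ‖fderiv ℝ ρ (γ t) - L‖ * ‖v‖ :=
        (fderiv ℝ ρ (γ t) - L).le_opNorm v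
      have h3 : ‖fderiv ℝ ρ (γ t) - L‖ * ‖v‖ ≤ (a/4) * (2/a) := by
        apply mul_le_mul _ hvn (norm_nonneg _) (by positivity)
        rw [← dist_eq_norm]
        exact hdd.le
      have h4 : (a/4) * (2/a) = 1/2 := by field_simp; ring
      have h5 : |fderiv ℝ ρ (γ t) v - L v| ≤ 1/2 := by
        have : fderiv ℝ ρ (γ t) v - L v = (fderiv ℝ ρ (γ t) - L) v := by
          simp [ContinuousLinearMap.sub_apply]
        rw [this, ← Real.norm_eq_abs]
        linarith
      rw [hLv] at h5
      have := (abs_le.1 h5).1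
      linarith
    have hDhigh : ∀ t ∈ Icc (0:ℝ) T', fderiv ℝ ρ (γ t) v ≤ β := by
      intro t ht
      have h1 : ‖fderiv ℝ ρ (γ t) v‖ ≤ ‖fderiv ℝ ρ (γ t)‖ * ‖v‖ :=
        (fderiv ℝ ρ (γ t)).le_opNorm v
      have h2 : ‖fderiv ℝ ρ (γ t)‖ * ‖v‖ ≤ A * (2/a) := by
        apply mul_le_mul (hA _ (hγK2 t ht)) hvn (norm_nonneg _) hA0.le
      calc fderiv ℝ ρ (γ t) v ≤ |fderiv ℝ ρ (γ t) v| := le_abs_self _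
        _ ≤ A * (2/a) := by rw [← Real.norm_eq_abs]; linarith
        _ = β := hβdef.symm
    set G : ℝ → ℝ := fun t => ρ (γ t) with hGdef
    have hGderiv : ∀ t ∈ Icc (0:ℝ) T', HasDerivAt G (-(fderiv ℝ ρ (γ t) v)) t := by
      intro t ht
      have hline : HasDerivAt γ (-v) t := by
        simpa using ((hasDerivAt_id t).smul_const v).const_sub z
      have hρd : DifferentiableAt ℝ ρ (γ t) :=
        ((hρ.differentiableOn (by simp)) _ (hγU t ht)).differentiableAt
          (hU.mem_nhds (hγU t ht))
      have := hρd.hasFDerivAt.comp_hasDerivAt t hline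
      rw [map_neg] at this; exact this
    have hγcont : Continuous γ := by
      rw [hγdef]; exact continuous_const.sub (continuous_id.smul continuous_const)
    have hGcont : ContinuousOn G (Icc 0 T') :=
      hρ.continuousOn.comp hγcont.continuousOn (fun t ht => hγU t ht)
    -- monotonicity bounds
    have hanti : AntitoneOn (fun t => G t + t/2) (Icc 0 T') := by
      apply antitoneOn_of_deriv_nonpos (convex_Icc 0 T')
      · exact hGcont.add (continuous_id.div_const 2).continuousOn
      · intro t ht
        rw [interior_Icc] at ht
        have hder : HasDerivAt (fun t => G t + t/2) (-(fderiv ℝ ρ (γ t) v) + 1/2) t := by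
          exact (hGderiv t (Ioo_subset_Icc_self ht)).add ((hasDerivAt_id t).div_const 2)
        exact hder.differentiableAt.differentiableWithinAt
      · intro t ht
        rw [interior_Icc] at ht
        have hder : HasDerivAt (fun t => G t + t/2) (-(fderiv ℝ ρ (γ t) v) + 1/2) t := by
          exact (hGderiv t (Ioo_subset_Icc_self ht)).add ((hasDerivAt_id t).div_const 2)
        rw [hder.deriv]
        have := hDlow t (Ioo_subset_Icc_self ht)
        linarith
    have hmono : MonotoneOn (fun t => G t + β * t) (Icc 0 T') := by
      apply monotoneOn_of_deriv_nonneg (convex_Icc 0 T')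
      · exact hGcont.add (continuous_const.mul continuous_id).continuousOn
      · intro t ht
        rw [interior_Icc] at ht
        have hder : HasDerivAt (fun t => G t + β * t) (-(fderiv ℝ ρ (γ t) v) + β) t := by
          exact (hGderiv t (Ioo_subset_Icc_self ht)).add
              (((hasDerivAt_id t).const_mul β).congr_deriv (mul_one β))
        exact hder.differentiableAt.differentiableWithinAt
      · intro t ht
        rw [interior_Icc] at ht
        have hder : HasDerivAt (fun t => G t + β * t) (-(fderiv ℝ ρ (γ t) v) + β) t := by
          exact (hGderiv t (Ioo_subset_Icc_self ht)).add
              (((hasDerivAt_id t).const_mul β).congr_deriv (mul_one β))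
        rw [hder.deriv]
        have := hDhigh t (Ioo_subset_Icc_self ht)
        linarith
    have hρzT' : ρ z < T'/4 := lt_of_lt_of_le hρz (min_le_left _ _)
    have hG0 : G 0 = ρ z := by rw [hGdef]; simp [hγ0]
    have hGT' : G T' < 0 := by
      have h1 := hanti (left_mem_Icc.2 hT'pos.le) (right_mem_Icc.2 hT'pos.le) hT'pos.le
      simp only at h1
      rw [hG0] at h1
      linarith
    -- the hitting time
    set Aset := {t | t ∈ Icc (0:ℝ) T' ∧ γ t ∉ Ω} with hAsetdef
    have hT'A : T' ∈ Aset := by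
      refine ⟨right_mem_Icc.2 hT'pos.le, fun hmem => ?_⟩
      have := hρpos _ hmem
      rw [hGdef] at hGT'
      linarith
    have hAne : Aset.Nonempty := ⟨T', hT'A⟩
    have hAbdd : BddBelow Aset := ⟨0, fun t ht => ht.1.1⟩
    set t₁ := sInf Aset with ht₁def
    have ht₁0 : 0 ≤ t₁ := le_csInf hAne fun t ht => ht.1.1
    have ht₁le : t₁ ≤ T' := csInf_le hAbdd hT'A
    have hmemΩ : ∀ t, 0 ≤ t → t < t₁ → γ t ∈ Ω := by
      intro t ht0 htlt
      by_contra hnot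
      have : t ∈ Aset := ⟨⟨ht0, le_trans htlt.le ht₁le⟩, hnot⟩
      exact absurd (csInf_le hAbdd this) (not_le.2 htlt)
    have ht₁cl : γ t₁ ∈ closure Ω := by
      rcases eq_or_lt_of_le ht₁0 with heq | hpos
      · rw [← heq, hγ0]; exact subset_closure hz
      · have h0 : Tendsto (fun nn : ℕ => t₁/(nn+2) : ℕ → ℝ) atTop (𝓝 0) := by
          apply Tendsto.div_atTop tendsto_const_nhds
          apply tendsto_atTop_add_const_right _ 2 tendsto_natCast_atTop_atTop
        have hseq1 : Tendsto (fun nn : ℕ => t₁ - t₁/(nn+2)) atTop (𝓝 t₁) := by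
          have h1 := (tendsto_const_nhds (x := t₁) (f := atTop (α := ℕ))).sub h0
          simpa using h1
        have hseq : Tendsto (fun nn : ℕ => γ (t₁ - t₁/(nn+2))) atTop (𝓝 (γ t₁)) :=
          (hγcont.tendsto t₁).comp hseq1
        apply mem_closure_of_tendsto hseq
        apply Eventually.of_forall
        intro nn
        apply hmemΩ
        · have h1 : t₁/(nn+2) ≤ t₁ := by
            apply div_le_self hpos.le
            have h2 : (0:ℝ) ≤ (nn:ℝ) := Nat.cast_nonneg nn
            linarith
          linarith
        · have h2 : 0 < t₁/(nn+2) := by positivity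
          linarith
    have ht₁notΩ : γ t₁ ∉ Ω := by
      intro hmem
      have hnb : γ ⁻¹' Ω ∈ 𝓝 t₁ := hγcont.continuousAt.preimage_mem_nhds (hΩ.mem_nhds hmem)
      obtain ⟨η, hηpos, hball⟩ := Metric.mem_nhds_iff.1 hnb
      obtain ⟨t', ht'A, ht'lt⟩ := (csInf_lt_iff hAbdd hAne).1
        (by linarith : sInf Aset < t₁ + η)
      have h1 : t₁ ≤ t' := csInf_le hAbdd ht'A
      have h2 : t' ∈ Metric.ball t₁ η := by
        rw [mem_ball, Real.dist_eq, abs_of_nonneg (by linarith)]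
        linarith
      exact ht'A.2 (hball h2)
    have hpfront : γ t₁ ∈ frontier Ω := by
      rw [hΩ.frontier_eq]; exact ⟨ht₁cl, ht₁notΩ⟩
    have ht₁pos : 0 < t₁ := by
      rcases eq_or_lt_of_le ht₁0 with heq | hpos
      · exfalso; apply ht₁notΩ; rw [← heq, hγ0]; exact hz
      · exact hpos
    have hGt₁ : G t₁ = 0 := hρ0 _ hpfront
    have ht₁Icc : t₁ ∈ Icc (0:ℝ) T' := ⟨ht₁0, ht₁le⟩
    have ht₁ρz : t₁ ≤ 2 * ρ z := by
      have h1 := hanti (left_mem_Icc.2 hT'pos.le) ht₁Icc ht₁0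
      simp only at h1
      rw [hG0, hGt₁] at h1
      linarith
    -- the segment from the frontier point to z
    set pp := γ t₁ with hppdef
    have hσγ : ∀ s : ℝ, pp + s • v = γ (t₁ - s) := by
      intro s
      rw [hppdef, hγdef]
      simp only
      rw [sub_smul]
      abel
    have hzeq : pp + t₁ • v = z := by rw [hσγ]; simp [hγ0]
    have hσcl : ∀ s ∈ Icc (0:ℝ) t₁, pp + s • v ∈ closure Ω := by
      intro s hs
      rw [hσγ]
      rcases eq_or_lt_of_le hs.1 with heq0 | hs0
      · rw [← heq0]; simpa using frontier_subset_closure hpfront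
      · exact subset_closure (hmemΩ _ (by linarith [hs.2]) (by linarith))
    have hσU' : ∀ s ∈ Icc (0:ℝ) t₁, pp + s • v ∈ U := fun s hs => hcl (hσcl s hs)
    have hσΩ : ∀ s ∈ Ioc (0:ℝ) t₁, pp + s • v ∈ Ω := by
      intro s hs
      rw [hσγ]
      exact hmemΩ _ (by linarith [hs.2]) (by linarith [hs.1])
    have hsubT : ∀ s ∈ Icc (0:ℝ) t₁, t₁ - s ∈ Icc (0:ℝ) T' :=
      fun s hs => ⟨by linarith [hs.2], by linarith [hs.1]⟩
    have hrlow : ∀ s ∈ Icc (0:ℝ) t₁, (1/2) * s ≤ ρ (pp + s • v) := by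
      intro s hs
      rw [hσγ]
      have h := hanti (hsubT s hs) ht₁Icc (by linarith [hs.1])
      simp only at h
      rw [hGt₁] at h
      have : G (t₁ - s) = ρ (γ (t₁ - s)) := rfl
      linarith
    have hrhigh : ∀ s ∈ Icc (0:ℝ) t₁, ρ (pp + s • v) ≤ β * s := by
      intro s hs
      rw [hσγ]
      have h := hmono (hsubT s hs) ht₁Icc (by linarith [hs.1])
      simp only at h
      rw [hGt₁] at h
      have : G (t₁ - s) = ρ (γ (t₁ - s)) := rfl
      nlinarith
    -- smoothness of restrictions
    have hσsm : ContDiff ℝ (⊤ : ℕ∞) (fun s : ℝ => pp + s • v) :=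
      contDiff_const.add (contDiff_id.smul contDiff_const)
    have hmapsU : MapsTo (fun s : ℝ => pp + s • v) (Icc 0 t₁) U := fun s hs => hσU' s hs
    have hφs : ContDiffOn ℝ (⊤ : ℕ∞) (fun s => ψ (pp + s • v)) (Icc 0 t₁) :=
      hψ.comp hσsm.contDiffOn hmapsU
    have hus : ContDiffOn ℝ (⊤ : ℕ∞) (fun s => F (pp + s • v)) (Icc 0 t₁) :=
      hF.comp hσsm.contDiffOn hmapsU
    have hids : ∀ s ∈ Ioc (0:ℝ) t₁, F (pp + s • v)
        = ρ (pp + s • v) ^ m' * ψ (pp + s • v) * Real.log (ρ (pp + s • v)) :=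
      fun s hs => hFeq _ (hσΩ s hs)
    have hvanish := core_vanish (m' := m') ht₁pos (by norm_num : (0:ℝ) < 1/2)
      hus hφs hrlow hrhigh hids
    -- derivative bound along the segment
    have hline := lineDeriv_eq hU hψ pp v ht₁pos hσU' k
    have hbnd : ∀ y ∈ Icc (0:ℝ) t₁,
        ‖iteratedDerivWithin k (fun s => ψ (pp + s • v)) (Icc 0 t₁) y‖ ≤ CΨ * (2/a)^k := by
      intro y hy
      rw [hline y hy]
      calc ‖iteratedFDeriv ℝ k ψ (pp + y • v) (fun _ => v)‖
          ≤ ‖iteratedFDeriv ℝ k ψ (pp + y • v)‖ * ∏ _i : Fin k, ‖v‖ :=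
            (iteratedFDeriv ℝ k ψ (pp + y • v)).le_opNorm _
        _ = ‖iteratedFDeriv ℝ k ψ (pp + y • v)‖ * ‖v‖^k := by
            simp [Finset.prod_const]
        _ ≤ CΨ * (2/a)^k := by
            apply mul_le_mul (hCΨ _ (hσcl y hy))
              (pow_le_pow_left₀ (norm_nonneg v) hvn k)
              (pow_nonneg (norm_nonneg v) k) hCΨ0
    have hfinal := bound_of_vanish ht₁pos hφs k (fun i _ => hvanish i) hbnd t₁
      (right_mem_Icc.2 ht₁0)
    rw [hzeq] at hfinal
    calc |ψ z| ≤ CΨ * (2/a)^k * t₁^k := hfinal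
      _ ≤ CΨ * (2/a)^k * (2 * ρ z)^k := by
          apply mul_le_mul_of_nonneg_left (pow_le_pow_left₀ ht₁0 ht₁ρz k) (by positivity)
      _ = (CΨ * (2/a)^k * 2^k) * ρ z ^ k := by rw [mul_pow]; ring
  -- combine near and far cases
  refine ⟨max (Mψ / ε^k) (CΨ * (2/a)^k * 2^k), fun z hz => ?_⟩
  have hρz0 : 0 < ρ z := hρpos z hz
  by_cases hc : ρ z < ε
  · calc |ψ z| ≤ (CΨ * (2/a)^k * 2^k) * ρ z ^ k := key z hz hc
      _ ≤ max (Mψ / ε^k) (CΨ * (2/a)^k * 2^k) * ρ z ^ k := by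
          apply mul_le_mul_of_nonneg_right (le_max_right _ _) (by positivity)
  · push_neg at hc
    have h1 : ε^k ≤ ρ z ^ k := pow_le_pow_left₀ hεpos.le hc k
    have h2 : |ψ z| ≤ Mψ := by
      simpa [Real.norm_eq_abs] using hMψ z (subset_closure hz)
    calc |ψ z| ≤ Mψ := h2
      _ ≤ Mψ / ε^k * ρ z ^ k := by
          rw [div_mul_eq_mul_div, le_div_iff₀ (pow_pos hεpos k)]
          exact mul_le_mul_of_nonneg_left h1 hMψ0
      _ ≤ max (Mψ / ε^k) (CΨ * (2/a)^k * 2^k) * ρ z ^ k := by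
          apply mul_le_mul_of_nonneg_right (le_max_left _ _) (by positivity)
end

section
/- If a(t) and b(t) are smooth real functions on [0, ε) and the function t ↦ a(t) + b(t) t^k log t (extended by a(0) at t = 0) is C^∞ on [0, ε) for some integer k ≥ 1, then b vanishes to infinite order at 0, i.e. b^{(j)}(0) = 0 for all j ≥ 0. -/
open Set Filter Real

lemma fw_congr_set {f : ℝ → ℝ} {c ε : ℝ} (hc : 0 < c) (hcε : c < ε) (m : ℕ) :
    iteratedDerivWithin m f (Icc 0 c) 0 = iteratedDerivWithin m f (Ico 0 ε) 0 := by
  have h : Icc (0:ℝ) c =ᶠ[nhds 0] Ico 0 ε := by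
    rw [Filter.eventuallyEq_set]
    filter_upwards [Ioo_mem_nhds (by linarith : -c < (0:ℝ)) hc] with y hy
    simp only [mem_Icc, mem_Ico, mem_Ioo] at *
    constructor
    · rintro ⟨h1, _⟩; exact ⟨h1, lt_trans hy.2 hcε⟩
    · rintro ⟨h1, _⟩; exact ⟨h1, hy.2.le⟩
  simp only [iteratedDerivWithin]
  rw [iteratedFDerivWithin_congr_set h m]

lemma fw_taylor {f : ℝ → ℝ} {c : ℝ} (hc : 0 < c) (hf : ContDiffOn ℝ (⊤ : ℕ∞) f (Icc 0 c)) (n : ℕ)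
    (h0 : ∀ i < n, iteratedDerivWithin i f (Icc 0 c) 0 = 0) :
    ∃ C : ℝ, 0 ≤ C ∧ ∀ x ∈ Icc (0:ℝ) c,
      |f x - (n.factorial : ℝ)⁻¹ * x ^ n * iteratedDerivWithin n f (Icc 0 c) 0| ≤ C * x ^ (n + 1) := by
  obtain ⟨C, hC⟩ := exists_taylor_mean_remainder_bound hc.le
    (hf.of_le (by exact_mod_cast le_top) : ContDiffOn ℝ (n+1) f (Icc 0 c))
  refine ⟨max C 0, le_max_right _ _, fun x hx => ?_⟩
  have h1 := hC x hx
  rw [taylor_within_apply, Finset.sum_range_succ] at h1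
  have h2 : ∑ i ∈ Finset.range n, (((i.factorial : ℝ))⁻¹ * (x - 0) ^ i) •
      iteratedDerivWithin i f (Icc 0 c) 0 = 0 := by
    refine Finset.sum_eq_zero fun i hi => ?_
    rw [h0 i (Finset.mem_range.mp hi), smul_zero]
  rw [h2, zero_add, smul_eq_mul, sub_zero] at h1
  calc |f x - (n.factorial : ℝ)⁻¹ * x ^ n * iteratedDerivWithin n f (Icc 0 c) 0|
      = ‖f x - (n.factorial : ℝ)⁻¹ * x ^ n * iteratedDerivWithin n f (Icc 0 c) 0‖ := rfl
    _ ≤ C * x ^ (n + 1) := h1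
    _ ≤ max C 0 * x ^ (n + 1) := by
        have : (0:ℝ) ≤ x ^ (n+1) := pow_nonneg hx.1 _
        gcongr; exact le_max_left _ _

lemma fw_tendsto_x : Tendsto (fun x : ℝ => x) (nhdsWithin 0 (Ioi 0)) (nhds 0) :=
  tendsto_id.mono_left nhdsWithin_le_nhds

lemma fw_tendsto_xlog : Tendsto (fun x : ℝ => x * |Real.log x|) (nhdsWithin 0 (Ioi 0)) (nhds 0) := by
  have h := tendsto_log_mul_rpow_nhdsGT_zero zero_lt_one
  simp only [Real.rpow_one] at h
  have h2 : Tendsto (fun x : ℝ => |Real.log x * x|) (nhdsWithin 0 (Ioi 0)) (nhds 0) := by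
    simpa using h.abs
  refine h2.congr' ?_
  filter_upwards [self_mem_nhdsWithin] with x (hx : x ∈ Ioi (0:ℝ))
  rw [abs_mul, abs_of_pos (show (0:ℝ) < x from hx), mul_comm]

lemma fw_tendsto_invlog : Tendsto (fun x : ℝ => |Real.log x|⁻¹) (nhdsWithin 0 (Ioi 0)) (nhds 0) :=
  tendsto_inv_atTop_zero.comp (tendsto_abs_atBot_atTop.comp Real.tendsto_log_nhdsGT_zero)

/-- One-dimensional Fu–Wong lemma: if `a, b` are smooth on `[0, ε)` and
`t ↦ a(t) + b(t) tᵏ log t` (with value `a(0)` at `t = 0`) is `C^∞` on `[0, ε)` for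
some `k ≥ 1`, then `b` vanishes to infinite order at `0`. -/
theorem stmt_16 (ε : ℝ) (hε : 0 < ε) (k : ℕ) (hk : 1 ≤ k) (a b : ℝ → ℝ)
    (ha : ContDiffOn ℝ (⊤ : ℕ∞) a (Set.Ico 0 ε)) (hb : ContDiffOn ℝ (⊤ : ℕ∞) b (Set.Ico 0 ε))
    (hsmooth : ContDiffOn ℝ (⊤ : ℕ∞)
      (fun t => if t = 0 then a 0 else a t + b t * t ^ k * Real.log t)
      (Set.Ico 0 ε)) :
    ∀ j : ℕ, iteratedDerivWithin j b (Set.Ico 0 ε) 0 = 0 := by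
  have hc : (0:ℝ) < ε/2 := by linarith
  have hcε : ε/2 < ε := by linarith
  have hTs : Icc 0 (ε/2) ⊆ Ico 0 ε := fun x hx => ⟨hx.1, lt_of_le_of_lt hx.2 hcε⟩
  set g : ℝ → ℝ := fun t => if t = 0 then 0 else b t * t ^ k * Real.log t with hgdef
  have hg : ContDiffOn ℝ (⊤ : ℕ∞) g (Ico 0 ε) := by
    refine (hsmooth.sub ha).congr fun t ht => ?_
    by_cases h : t = 0
    · simp [hgdef, h]
    · simp only [hgdef, if_neg h]; ring
  have hgT : ContDiffOn ℝ (⊤ : ℕ∞) g (Icc 0 (ε/2)) := hg.mono hTs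
  have hbT : ContDiffOn ℝ (⊤ : ℕ∞) b (Icc 0 (ε/2)) := hb.mono hTs
  intro j
  induction j using Nat.strong_induction_on with
  | _ j IH =>
  rw [← fw_congr_set hc hcε j]
  obtain ⟨C₁, hC₁0, hC₁⟩ := fw_taylor hc hbT j
    (fun i hi => by rw [fw_congr_set hc hcε]; exact IH i hi)
  set cb := iteratedDerivWithin j b (Icc (0:ℝ) (ε/2)) 0 with hcb
  have hM : ∀ x ∈ Icc (0:ℝ) (ε/2), |b x| ≤ (C₁ * (ε/2) + (j.factorial : ℝ)⁻¹ * |cb|) * x ^ j := by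
    intro x hx
    have e := hC₁ x hx
    have tri : |b x| ≤ |b x - (j.factorial : ℝ)⁻¹ * x ^ j * cb|
        + (j.factorial : ℝ)⁻¹ * x ^ j * |cb| := by
      have h1 : |(j.factorial : ℝ)⁻¹ * x ^ j * cb| = (j.factorial : ℝ)⁻¹ * x ^ j * |cb| := by
        rw [abs_mul]; congr 1
        rw [abs_of_nonneg (mul_nonneg (by positivity) (pow_nonneg hx.1 j))]
      calc |b x| = |(b x - (j.factorial : ℝ)⁻¹ * x ^ j * cb)
            + (j.factorial : ℝ)⁻¹ * x ^ j * cb| := by rw [sub_add_cancel]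
        _ ≤ |b x - (j.factorial : ℝ)⁻¹ * x ^ j * cb|
            + |(j.factorial : ℝ)⁻¹ * x ^ j * cb| := abs_add_le _ _
        _ = _ := by rw [h1]
    have hxx : x ^ (j+1) = x ^ j * x := pow_succ x j
    rw [hxx] at e
    have hb1 : 0 ≤ x ^ j := pow_nonneg hx.1 j
    nlinarith [mul_nonneg hC₁0 hb1, hx.2, hx.1, abs_nonneg cb,
      mul_nonneg (mul_nonneg (by positivity : (0:ℝ) ≤ (j.factorial : ℝ)⁻¹) (abs_nonneg cb)) hb1]
  set M : ℝ := C₁ * (ε/2) + (j.factorial : ℝ)⁻¹ * |cb| with hMdef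
  have hgz : ∀ i, i < j + k → iteratedDerivWithin i g (Icc (0:ℝ) (ε/2)) 0 = 0 := by
    intro i
    induction i using Nat.strong_induction_on with
    | _ i IHi =>
    intro hi
    obtain ⟨C₂, hC₂0, hC₂⟩ := fw_taylor hc hgT i (fun m hm => IHi m hm (lt_trans hm hi))
    set q := iteratedDerivWithin i g (Icc (0:ℝ) (ε/2)) 0 with hq
    obtain ⟨m', hm'⟩ : ∃ m', j + k - i = m' + 1 := ⟨j + k - i - 1, by omega⟩
    have key : ∀ᶠ x in nhdsWithin (0:ℝ) (Ioi 0),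
        |q| / (i.factorial : ℝ) ≤ M * (x ^ (m'+1) * |Real.log x|) + C₂ * x := by
      filter_upwards [Ioo_mem_nhdsGT_of_mem (left_mem_Ico.mpr hc)] with x hx
      have hx1 : 0 < x := hx.1
      have hxT : x ∈ Icc (0:ℝ) (ε/2) := ⟨hx1.le, hx.2.le⟩
      have e2 := hC₂ x hxT
      have hgx : g x = b x * x ^ k * Real.log x := if_neg (ne_of_gt hx1)
      have habs : |(i.factorial : ℝ)⁻¹ * x ^ i * q| = (i.factorial : ℝ)⁻¹ * x ^ i * |q| := by
        rw [abs_mul]; congr 1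
        rw [abs_of_nonneg (mul_nonneg (by positivity) (pow_nonneg hx1.le i))]
      have tri : |(i.factorial : ℝ)⁻¹ * x ^ i * q|
          ≤ |g x| + |g x - (i.factorial : ℝ)⁻¹ * x ^ i * q| := by
        calc |(i.factorial : ℝ)⁻¹ * x ^ i * q|
            = |((i.factorial : ℝ)⁻¹ * x ^ i * q - g x) + g x| := by rw [sub_add_cancel]
          _ ≤ |(i.factorial : ℝ)⁻¹ * x ^ i * q - g x| + |g x| := abs_add_le _ _
          _ = |g x| + |g x - (i.factorial : ℝ)⁻¹ * x ^ i * q| := by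
              rw [abs_sub_comm, add_comm]
      have hgb : |g x| ≤ M * x ^ j * x ^ k * |Real.log x| := by
        calc |g x| = |b x| * x ^ k * |Real.log x| := by
              rw [hgx, abs_mul, abs_mul, abs_pow, abs_of_pos hx1]
          _ ≤ M * x ^ j * x ^ k * |Real.log x| :=
              mul_le_mul_of_nonneg_right
                (mul_le_mul_of_nonneg_right (hM x hxT) (pow_nonneg hx1.le k))
                (abs_nonneg _)
      have A : (i.factorial : ℝ)⁻¹ * x ^ i * |q|
          ≤ M * x ^ (j+k) * |Real.log x| + C₂ * x ^ (i+1) := by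
        calc (i.factorial : ℝ)⁻¹ * x ^ i * |q| = |(i.factorial : ℝ)⁻¹ * x ^ i * q| := habs.symm
          _ ≤ |g x| + |g x - (i.factorial : ℝ)⁻¹ * x ^ i * q| := tri
          _ ≤ M * x ^ j * x ^ k * |Real.log x| + C₂ * x ^ (i+1) := add_le_add hgb e2
          _ = M * x ^ (j+k) * |Real.log x| + C₂ * x ^ (i+1) := by rw [pow_add]; ring
      refine le_of_mul_le_mul_right ?_ (pow_pos hx1 i)
      have hp2 : x ^ (j+k) = x ^ (m'+1) * x ^ i := by rw [← pow_add]; congr 1; omega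
      rw [hp2] at A
      have hxi : x ^ (i+1) = x ^ i * x := pow_succ x i
      rw [hxi] at A
      rw [div_eq_mul_inv]
      nlinarith [A]
    have t1 : Tendsto (fun x : ℝ => x ^ (m'+1) * |Real.log x|)
        (nhdsWithin 0 (Ioi 0)) (nhds 0) := by
      have h : Tendsto (fun x : ℝ => x ^ m' * (x * |Real.log x|))
          (nhdsWithin 0 (Ioi 0)) (nhds 0) := by
        simpa using (fw_tendsto_x.pow m').mul fw_tendsto_xlog
      exact h.congr fun x => by ring
    have tlim : Tendsto (fun x : ℝ => M * (x ^ (m'+1) * |Real.log x|) + C₂ * x)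
        (nhdsWithin 0 (Ioi 0)) (nhds 0) := by
      simpa using (tendsto_const_nhds.mul t1).add (tendsto_const_nhds.mul fw_tendsto_x)
    have h0 : |q| / (i.factorial : ℝ) ≤ 0 := ge_of_tendsto tlim key
    have hfac : (0:ℝ) < (i.factorial : ℝ) := by positivity
    have := (div_le_iff₀ hfac).mp h0
    rw [zero_mul] at this
    exact abs_eq_zero.mp (le_antisymm this (abs_nonneg q))
  obtain ⟨C₂, hC₂0, hC₂⟩ := fw_taylor hc hgT (j+k) hgz
  set q := iteratedDerivWithin (j+k) g (Icc (0:ℝ) (ε/2)) 0 with hq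
  have key : ∀ᶠ x in nhdsWithin (0:ℝ) (Ioi 0),
      |cb| / (j.factorial : ℝ) ≤ |q| / ((j+k).factorial : ℝ) * |Real.log x|⁻¹
        + C₂ * (x * |Real.log x|⁻¹) + C₁ * x := by
    filter_upwards [Ioo_mem_nhdsGT_of_mem (left_mem_Ico.mpr (lt_min hc one_pos))] with x hx
    have hx1 : 0 < x := hx.1
    have hxc : x < ε/2 := lt_of_lt_of_le hx.2 (min_le_left _ _)
    have hx1' : x < 1 := lt_of_lt_of_le hx.2 (min_le_right _ _)
    have hxT : x ∈ Icc (0:ℝ) (ε/2) := ⟨hx1.le, hxc.le⟩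
    have hL : 0 < |Real.log x| := abs_pos.mpr (ne_of_lt (Real.log_neg hx1 hx1'))
    have e1 := hC₁ x hxT
    have e2 := hC₂ x hxT
    have hgx : g x = b x * x ^ k * Real.log x := if_neg (ne_of_gt hx1)
    have dec : ((j.factorial : ℝ)⁻¹ * x ^ j * cb) * (x ^ k * Real.log x)
        = (((j.factorial : ℝ)⁻¹ * x ^ j * cb) - b x) * (x ^ k * Real.log x)
          + (g x - ((j+k).factorial : ℝ)⁻¹ * x ^ (j+k) * q)
          + ((j+k).factorial : ℝ)⁻¹ * x ^ (j+k) * q := by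
      rw [hgx]; ring
    have lhs_eq : |((j.factorial : ℝ)⁻¹ * x ^ j * cb) * (x ^ k * Real.log x)|
        = |cb| / (j.factorial : ℝ) * (x ^ (j+k) * |Real.log x|) := by
      simp only [abs_mul, abs_inv, Nat.abs_cast, abs_pow, abs_of_pos hx1]
      rw [pow_add, div_eq_mul_inv]; ring
    have hX : |(((j.factorial : ℝ)⁻¹ * x ^ j * cb) - b x) * (x ^ k * Real.log x)|
        ≤ C₁ * x ^ (j+k+1) * |Real.log x| := by
      rw [abs_mul, abs_sub_comm]
      have h2 : |x ^ k * Real.log x| = x ^ k * |Real.log x| := by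
        rw [abs_mul, abs_pow, abs_of_pos hx1]
      rw [h2]
      calc |b x - (j.factorial : ℝ)⁻¹ * x ^ j * cb| * (x ^ k * |Real.log x|)
          ≤ (C₁ * x ^ (j+1)) * (x ^ k * |Real.log x|) :=
            mul_le_mul_of_nonneg_right e1 (by positivity)
        _ = C₁ * x ^ (j+k+1) * |Real.log x| := by
            rw [show x ^ (j+k+1) = x ^ (j+1) * x ^ k by rw [← pow_add]; congr 1; omega]
            ring
    have hZ : |((j+k).factorial : ℝ)⁻¹ * x ^ (j+k) * q|
        = ((j+k).factorial : ℝ)⁻¹ * x ^ (j+k) * |q| := by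
      rw [abs_mul]; congr 1
      rw [abs_of_nonneg (mul_nonneg (by positivity) (pow_nonneg hx1.le _))]
    have A2 : |cb| / (j.factorial : ℝ) * (x ^ (j+k) * |Real.log x|)
        ≤ C₁ * x ^ (j+k+1) * |Real.log x| + C₂ * x ^ (j+k+1)
          + ((j+k).factorial : ℝ)⁻¹ * x ^ (j+k) * |q| := by
      rw [← lhs_eq, dec]
      calc |(((j.factorial : ℝ)⁻¹ * x ^ j * cb) - b x) * (x ^ k * Real.log x)
            + (g x - ((j+k).factorial : ℝ)⁻¹ * x ^ (j+k) * q)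
            + ((j+k).factorial : ℝ)⁻¹ * x ^ (j+k) * q|
          ≤ |(((j.factorial : ℝ)⁻¹ * x ^ j * cb) - b x) * (x ^ k * Real.log x)|
            + |g x - ((j+k).factorial : ℝ)⁻¹ * x ^ (j+k) * q|
            + |((j+k).factorial : ℝ)⁻¹ * x ^ (j+k) * q| :=
            (abs_add_le _ _).trans (add_le_add_left (abs_add_le _ _) _)
        _ ≤ _ := by rw [hZ]; exact add_le_add (add_le_add hX e2) le_rfl
    refine le_of_mul_le_mul_right ?_ (mul_pos (pow_pos hx1 (j+k)) hL)
    have expand : (|q| / ((j+k).factorial : ℝ) * |Real.log x|⁻¹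
          + C₂ * (x * |Real.log x|⁻¹) + C₁ * x) * (x ^ (j+k) * |Real.log x|)
        = ((j+k).factorial : ℝ)⁻¹ * x ^ (j+k) * |q| + C₂ * x ^ (j+k+1)
          + C₁ * x ^ (j+k+1) * |Real.log x| := by
      have hfac : ((j+k).factorial : ℝ) ≠ 0 := by positivity
      field_simp
      ring
    rw [expand]
    linarith [A2]
  have tlim : Tendsto (fun x : ℝ => |q| / ((j+k).factorial : ℝ) * |Real.log x|⁻¹
      + C₂ * (x * |Real.log x|⁻¹) + C₁ * x) (nhdsWithin 0 (Ioi 0)) (nhds 0) := by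
    simpa using ((tendsto_const_nhds.mul fw_tendsto_invlog).add
      (tendsto_const_nhds.mul (fw_tendsto_x.mul fw_tendsto_invlog))).add
      (tendsto_const_nhds.mul fw_tendsto_x)
  have h0 : |cb| / (j.factorial : ℝ) ≤ 0 := ge_of_tendsto tlim key
  have hfac : (0:ℝ) < (j.factorial : ℝ) := by positivity
  have hcb0 := (div_le_iff₀ hfac).mp h0
  rw [zero_mul] at hcb0
  exact abs_eq_zero.mp (le_antisymm hcb0 (abs_nonneg cb))
end
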